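/- Let h_p, w_p ∈ ℕ_{>0} be pooling window sizes, p_h, p_w ∈ ℕ padding sizes, s_h, s_w ∈ ℕ_{>0} strides, and x ∈ ℝ^{c_x×h_x×w_x} an input tensor. Let h_y, w_y ∈ ℕ_{>0} be the output height and width. Define the max-pooling output y ∈ ℝ^{c_x×h_y×w_y} by y[i_{c_x},i_{h_y},i_{w_y}] = max_{i_{h_p} ∈ [h_p], i_{w_p} ∈ [w_p]} x̄[i_{c_x},j_h,j_w], where j_h = i_{h_p}+(i_{h_y}−1)s_h−p_h, j_w = i_{w_p}+(i_{w_y}−1)s_w−p_w, and x̄[i_{c_x},j_h,j_w] = x[i_{c_x},j_h,j_w] if 1 ≤ j_h ≤ h_x and 1 ≤ j_w ≤ w_x, and 0 otherwise. Let x̃ and ỹ be the row-major flattenings of x and y. Then for every i_{c_x} ∈ [c_x], i_{h_y} ∈ [h_y], i_{w_y} ∈ [w_y], the entry of ỹ at position (i_{c_x}−1)h_y·w_y + (i_{h_y}−1)w_y + i_{w_y} equals max(W^{mp}_{i_{c_x},i_{h_y},i_{w_y}}·W̃^{p}·x̃), where max(·) of a vector denotes the maximum of its components, W̃^{p} ∈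 ℝ^{(c_x·(h_x+2p_h)·(w_x+2p_w))×(c_x·h_x·w_x)} is the zero matrix except for entries equal to 1 at row 𝔦_row = (i_{c_x}−1)(h_x+2p_h)(w_x+2p_w) + p_h(w_x+2p_w) + (i_{h_x}−1)(w_x+2p_w) + p_w + i_{w_x} and column 𝔦_col = (i_{c_x}−1)h_x·w_x + (i_{h_x}−1)w_x + i_{w_x} for all i_{c_x} ∈ [c_x], i_{h_x} ∈ [h_x], i_{w_x} ∈ [w_x], and W^{mp}_{i_{c_x},i_{h_y},i_{w_y}} ∈ ℝ^{(h_p·w_p)×(c_x·(h_x+2p_h)·(w_x+2p_w))} is the zero matrix except for entries equal to 1 at row 𝔧_row = (i_{h_p}−1)w_p + i_{w_p} and column 𝔧_col = (i_{c_x}−1)(h_x+2p_h)(w_x+2p_w) + (i_{w_y}−1)s_w + i_{w_p} + (i_{h_p}−1)(w_x+2p_w) + (i_{h_y}−1)(w_x+2p_w)s_h, for all i_{h_p} ∈ [h_p], i_{w_p} ∈ [w_p]. -/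

import Mathlib

open Finset

/-- `(r, c)` is one of the positions of the `1` entries of the padding matrix `W̃ᵖ`:
`r = 𝔦_row = (i_cx−1)(h_x+2p_h)(w_x+2p_w) + p_h(w_x+2p_w) + (i_hx−1)(w_x+2p_w) + p_w + i_wx`
and `c = 𝔦_col = (i_cx−1)h_x·w_x + (i_hx−1)w_x + i_wx` for some `i_cx ∈ [c_x]`,
`i_hx ∈ [h_x]`, `i_wx ∈ [w_x]` (1-based indices). -/
def IsPadEntry (cx hx wx ph pw : ℕ) (r c : ℕ) : Prop :=
  ∃ icx ∈ Icc 1 cx, ∃ ihx ∈ Icc 1 hx, ∃ iwx ∈ Icc 1 wx,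
    r = (icx - 1) * ((hx + 2 * ph) * (wx + 2 * pw)) + ph * (wx + 2 * pw) +
          (ihx - 1) * (wx + 2 * pw) + pw + iwx ∧
    c = (icx - 1) * (hx * wx) + (ihx - 1) * wx + iwx

/-- The row index `𝔧_row = (i_hp−1)w_p + i_wp` of `W^{mp}_{i_cx,i_hy,i_wy}`. -/
def mpRow (wp : ℕ) (ihp iwp : ℕ) : ℕ := (ihp - 1) * wp + iwp

/-- The column index `𝔧_col = (i_cx−1)(h_x+2p_h)(w_x+2p_w) + (i_wy−1)s_w + i_wp
+ (i_hp−1)(w_x+2p_w) + (i_hy−1)(w_x+2p_w)s_h` of `W^{mp}_{i_cx,i_hy,i_wy}`. -/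
def mpCol (hx wx ph pw sh sw : ℕ) (icx ihy iwy ihp iwp : ℕ) : ℕ :=
  (icx - 1) * ((hx + 2 * ph) * (wx + 2 * pw)) + (iwy - 1) * sw + iwp +
    (ihp - 1) * (wx + 2 * pw) + (ihy - 1) * ((wx + 2 * pw) * sh)

/-!
Each row of `W^{mp}_{i_cx,i_hy,i_wy}` has a single `1`, in the column of the padded tensor read
at its window position, and each row of `W̃ᵖ` has at most one `1`, which copies an input entry to
its padded position (padding positions are zero rows).  So the `(i_hp, i_wp)`-th entry of
`W^{mp}·W̃ᵖ·x̃` is exactly the zero-padded input entry that max pooling reads there.  The formula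
for `h_y, w_y` keeps every window inside the padded tensor, so no flattened index wraps into a
neighbouring row or channel, and `(i_hp−1)w_p + i_wp` enumerates `[h_p·w_p]` bijectively, so both
maxima run over the same values.
-/

def rowMajor (w i j : ℕ) : ℕ := (i - 1) * w + j

lemma rowMajor_mem_Icc {h w i j : ℕ} (hi : i ∈ Icc 1 h) (hj : j ∈ Icc 1 w) :
    rowMajor w i j ∈ Icc 1 (h * w) := by
  rw [mem_Icc] at hi hj ⊢
  have hiw : i * w ≤ h * w := Nat.mul_le_mul_right w hi.2
  have hwi : w ≤ i * w := Nat.le_mul_of_pos_left w hi.1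
  have : (i - 1) * w = i * w - w := Nat.sub_one_mul i w
  unfold rowMajor
  omega

lemma rowMajor_sub_one_div_mod {w i j : ℕ} (hj : j ∈ Icc 1 w) :
    (rowMajor w i j - 1) / w = i - 1 ∧ (rowMajor w i j - 1) % w = j - 1 := by
  rw [mem_Icc] at hj
  rw [Nat.div_mod_unique (by omega), rowMajor]
  exact ⟨by rw [Nat.mul_comm]; omega, by omega⟩

lemma rowMajor_inj {w i i' j j' : ℕ} (hi : 1 ≤ i) (hi' : 1 ≤ i') (hj : j ∈ Icc 1 w)
    (hj' : j' ∈ Icc 1 w) : rowMajor w i j = rowMajor w i' j' ↔ i = i' ∧ j = j' := by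
  refine ⟨fun h => ?_, fun ⟨hii, hjj⟩ => hii ▸ hjj ▸ rfl⟩
  have hdecode := rowMajor_sub_one_div_mod (i := i) hj
  rw [h, (rowMajor_sub_one_div_mod hj').1, (rowMajor_sub_one_div_mod hj').2] at hdecode
  rw [mem_Icc] at hj hj'
  omega

lemma image_rowMajor_product (h w : ℕ) :
    (Icc 1 h ×ˢ Icc 1 w).image (fun q => rowMajor w q.1 q.2) = Icc 1 (h * w) := by
  ext n
  simp only [mem_image, mem_product, Prod.exists]
  refine ⟨fun ⟨i, j, ⟨hi, hj⟩, hn⟩ => hn ▸ rowMajor_mem_Icc hi hj, fun hn => ?_⟩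
  rw [mem_Icc] at hn
  have hw : 0 < w := Nat.pos_of_mul_pos_left (by omega : 0 < h * w)
  have hdiv : (n - 1) / w < h := (Nat.div_lt_iff_lt_mul hw).mpr (by omega)
  refine ⟨(n - 1) / w + 1, (n - 1) % w + 1, ⟨?_, ?_⟩, ?_⟩
  · exact mem_Icc.mpr ⟨Nat.le_add_left 1 _, hdiv⟩
  · exact mem_Icc.mpr ⟨Nat.le_add_left 1 _, Nat.mod_lt _ hw⟩
  · have := Nat.div_add_mod (n - 1) w
    rw [rowMajor, Nat.add_sub_cancel, mul_comm]
    omega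

lemma add_sub_one_mul_mem_Icc {n s k i j : ℕ} (hi : i ∈ Icc 1 ((n + s - k) / s))
    (hj : j ∈ Icc 1 k) : j + (i - 1) * s ∈ Icc 1 n := by
  rw [mem_Icc] at hi hj ⊢
  have hs : 0 < s := Nat.pos_of_ne_zero fun hs => by simp [hs] at hi; omega
  have his : i * s ≤ n + s - k := (Nat.le_div_iff_mul_le hs).mp hi.2
  have hsi : s ≤ i * s := Nat.le_mul_of_pos_left s hi.1
  have : (i - 1) * s = i * s - s := Nat.sub_one_mul i s
  omega

lemma padEntryRow_eq_rowMajor {hx wx ph pw icx ihx iwx : ℕ} (hihx : 1 ≤ ihx) :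
    (icx - 1) * ((hx + 2 * ph) * (wx + 2 * pw)) + ph * (wx + 2 * pw) +
        (ihx - 1) * (wx + 2 * pw) + pw + iwx =
      rowMajor ((hx + 2 * ph) * (wx + 2 * pw)) icx
        (rowMajor (wx + 2 * pw) (ph + ihx) (pw + iwx)) := by
  obtain ⟨k, rfl⟩ := Nat.exists_eq_add_of_le' hihx
  simp only [rowMajor, Nat.add_sub_cancel, ← add_assoc ph k 1]
  ring

lemma isPadEntry_rowMajor_iff {cx hx wx ph pw icx jh jw c : ℕ} (hicx : 1 ≤ icx)
    (hjh : jh ∈ Icc 1 (hx + 2 * ph)) (hjw : jw ∈ Icc 1 (wx + 2 * pw)) :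
    IsPadEntry cx hx wx ph pw
        (rowMajor ((hx + 2 * ph) * (wx + 2 * pw)) icx (rowMajor (wx + 2 * pw) jh jw)) c ↔
      icx ≤ cx ∧ (1 ≤ jh - ph ∧ jh - ph ≤ hx ∧ 1 ≤ jw - pw ∧ jw - pw ≤ wx) ∧
        c = (icx - 1) * (hx * wx) + (jh - ph - 1) * wx + (jw - pw) := by
  constructor
  · rintro ⟨icx', hicx', ihx, hihx, iwx, hiwx, hr, rfl⟩
    rw [mem_Icc] at hicx' hihx hiwx
    have hph : ph + ihx ∈ Icc 1 (hx + 2 * ph) := mem_Icc.mpr ⟨by omega, by omega⟩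
    have hpw : pw + iwx ∈ Icc 1 (wx + 2 * pw) := mem_Icc.mpr ⟨by omega, by omega⟩
    rw [padEntryRow_eq_rowMajor hihx.1,
      rowMajor_inj hicx hicx'.1 (rowMajor_mem_Icc hjh hjw) (rowMajor_mem_Icc hph hpw),
      rowMajor_inj (mem_Icc.mp hjh).1 (mem_Icc.mp hph).1 hjw hpw] at hr
    obtain ⟨rfl, rfl, rfl⟩ := hr
    refine ⟨hicx'.2, by omega, ?_⟩
    rw [Nat.add_sub_cancel_left, Nat.add_sub_cancel_left]
  · rintro ⟨hcx, hwin, rfl⟩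
    rw [mem_Icc] at hjh hjw
    refine ⟨icx, mem_Icc.mpr ⟨hicx, hcx⟩, jh - ph, mem_Icc.mpr ⟨hwin.1, hwin.2.1⟩,
      jw - pw, mem_Icc.mpr hwin.2.2, ?_, rfl⟩
    rw [padEntryRow_eq_rowMajor hwin.1, Nat.add_sub_cancel' (by omega),
      Nat.add_sub_cancel' (by omega)]

lemma sum_padMatrix_row_mul {cx hx wx ph pw : ℕ} {x : ℕ → ℕ → ℕ → ℝ} {xt : ℕ → ℝ}
    {Wp : ℕ → ℕ → ℝ}
    (hxt : ∀ icx ∈ Icc 1 cx, ∀ ihx ∈ Icc 1 hx, ∀ iwx ∈ Icc 1 wx,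
      xt ((icx - 1) * (hx * wx) + (ihx - 1) * wx + iwx) = x icx ihx iwx)
    (hWp1 : ∀ r c : ℕ, IsPadEntry cx hx wx ph pw r c → Wp r c = 1)
    (hWp0 : ∀ r c : ℕ, ¬ IsPadEntry cx hx wx ph pw r c → Wp r c = 0)
    {icx jh jw : ℕ} (hicx : icx ∈ Icc 1 cx)
    (hjh : jh ∈ Icc 1 (hx + 2 * ph)) (hjw : jw ∈ Icc 1 (wx + 2 * pw)) :
    ∑ q ∈ Icc 1 (cx * (hx * wx)),
        Wp (rowMajor ((hx + 2 * ph) * (wx + 2 * pw)) icx (rowMajor (wx + 2 * pw) jh jw)) q *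
          xt q =
      if 1 ≤ jh - ph ∧ jh - ph ≤ hx ∧ 1 ≤ jw - pw ∧ jw - pw ≤ wx then
        x icx (jh - ph) (jw - pw) else 0 := by
  have hpad := fun c => isPadEntry_rowMajor_iff (cx := cx) (c := c) (mem_Icc.mp hicx).1 hjh hjw
  split_ifs with hwin
  · have hrow : ∀ q, Wp (rowMajor ((hx + 2 * ph) * (wx + 2 * pw)) icx
          (rowMajor (wx + 2 * pw) jh jw)) q =
        if (icx - 1) * (hx * wx) + (jh - ph - 1) * wx + (jw - pw) = q then 1 else 0 := by
      intro q
      split_ifs with hq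
      · exact hWp1 _ _ ((hpad q).mpr ⟨(mem_Icc.mp hicx).2, hwin, hq.symm⟩)
      · exact hWp0 _ _ fun h => hq ((hpad q).mp h).2.2.symm
    have hjh' : jh - ph ∈ Icc 1 hx := mem_Icc.mpr ⟨hwin.1, hwin.2.1⟩
    have hjw' : jw - pw ∈ Icc 1 wx := mem_Icc.mpr hwin.2.2
    have hmem : (icx - 1) * (hx * wx) + (jh - ph - 1) * wx + (jw - pw) ∈
        Icc 1 (cx * (hx * wx)) := by
      rw [add_assoc]
      exact rowMajor_mem_Icc hicx (rowMajor_mem_Icc hjh' hjw')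
    simp only [hrow, sum_boole_mul, if_pos hmem]
    exact hxt icx hicx _ hjh' _ hjw'
  · exact sum_eq_zero fun q _ => by rw [hWp0 _ _ fun h => hwin ((hpad q).mp h).2.1, zero_mul]

lemma mpRow_eq_rowMajor (wp ihp iwp : ℕ) : mpRow wp ihp iwp = rowMajor wp ihp iwp := rfl

lemma mpCol_eq_rowMajor {hx wx ph pw sh sw icx ihy iwy ihp iwp : ℕ} (hihp : 1 ≤ ihp) :
    mpCol hx wx ph pw sh sw icx ihy iwy ihp iwp =
      rowMajor ((hx + 2 * ph) * (wx + 2 * pw)) icx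
        (rowMajor (wx + 2 * pw) (ihp + (ihy - 1) * sh) (iwp + (iwy - 1) * sw)) := by
  obtain ⟨k, rfl⟩ := Nat.exists_eq_add_of_le' hihp
  simp only [mpCol, rowMajor, Nat.add_sub_cancel, add_right_comm k 1, Nat.add_sub_cancel]
  ring

lemma sum_mpMatrix_row_mul {cx hx wx ph pw sh sw hp wp hy wy N : ℕ}
    {Wmp : ℕ → ℕ → ℕ → ℕ → ℕ → ℝ}
    (hWmp1 : ∀ icx ∈ Icc 1 cx, ∀ ihy ∈ Icc 1 hy, ∀ iwy ∈ Icc 1 wy,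
      ∀ ihp ∈ Icc 1 hp, ∀ iwp ∈ Icc 1 wp,
        Wmp icx ihy iwy (mpRow wp ihp iwp) (mpCol hx wx ph pw sh sw icx ihy iwy ihp iwp) = 1)
    (hWmp0 : ∀ icx ∈ Icc 1 cx, ∀ ihy ∈ Icc 1 hy, ∀ iwy ∈ Icc 1 wy, ∀ r c : ℕ,
      (¬ ∃ ihp ∈ Icc 1 hp, ∃ iwp ∈ Icc 1 wp,
          r = mpRow wp ihp iwp ∧ c = mpCol hx wx ph pw sh sw icx ihy iwy ihp iwp) →
        Wmp icx ihy iwy r c = 0)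
    (S : ℕ → ℝ) {icx ihy iwy ihp iwp : ℕ} (hicx : icx ∈ Icc 1 cx) (hihy : ihy ∈ Icc 1 hy)
    (hiwy : iwy ∈ Icc 1 wy) (hihp : ihp ∈ Icc 1 hp) (hiwp : iwp ∈ Icc 1 wp)
    (hcol : mpCol hx wx ph pw sh sw icx ihy iwy ihp iwp ∈ Icc 1 N) :
    ∑ r ∈ Icc 1 N, Wmp icx ihy iwy (mpRow wp ihp iwp) r * S r =
      S (mpCol hx wx ph pw sh sw icx ihy iwy ihp iwp) := by
  have hrow : ∀ r, Wmp icx ihy iwy (mpRow wp ihp iwp) r =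
      if mpCol hx wx ph pw sh sw icx ihy iwy ihp iwp = r then 1 else 0 := by
    intro r
    split_ifs with hr
    · exact hr ▸ hWmp1 icx hicx ihy hihy iwy hiwy ihp hihp iwp hiwp
    · refine hWmp0 icx hicx ihy hihy iwy hiwy _ r ?_
      rintro ⟨ihp', hihp', iwp', hiwp', hsame, rfl⟩
      obtain ⟨rfl, rfl⟩ :=
        (rowMajor_inj (mem_Icc.mp hihp).1 (mem_Icc.mp hihp').1 hiwp hiwp').mp hsame
      exact hr rfl
  simp only [hrow, sum_boole_mul, if_pos hcol]

theorem maxpool_layer_eq_maxout_general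
    -- dimensions and hyperparameters
    (cx hx wx : ℕ) (hp wp : ℕ) (hhp : 0 < hp) (hwp : 0 < wp) (ph pw : ℕ)
    (sh sw : ℕ)
    (hy wy : ℕ)
    (hhy : hy = (hx + ph + sh - hp) / sh) (hwy : wy = (wx + pw + sw - wp) / sw)
    -- input tensor
    (x : ℕ → ℕ → ℕ → ℝ)
    -- the max-pooling output y
    (y : ℕ → ℕ → ℕ → ℝ)
    (hydef : ∀ icx ∈ Icc 1 cx, ∀ ihy ∈ Icc 1 hy, ∀ iwy ∈ Icc 1 wy,
      y icx ihy iwy = ((Icc 1 hp) ×ˢ (Icc 1 wp)).sup'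
        (Finset.Nonempty.product (Finset.nonempty_Icc.mpr hhp) (Finset.nonempty_Icc.mpr hwp))
        (fun q =>
          if 1 ≤ q.1 + (ihy - 1) * sh - ph ∧ q.1 + (ihy - 1) * sh - ph ≤ hx ∧
              1 ≤ q.2 + (iwy - 1) * sw - pw ∧ q.2 + (iwy - 1) * sw - pw ≤ wx then
            x icx (q.1 + (ihy - 1) * sh - ph) (q.2 + (iwy - 1) * sw - pw)
          else 0))
    -- row-major flattenings x̃ and ỹ
    (xt : ℕ → ℝ)
    (hxt : ∀ icx ∈ Icc 1 cx, ∀ ihx ∈ Icc 1 hx, ∀ iwx ∈ Icc 1 wx,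
      xt ((icx - 1) * (hx * wx) + (ihx - 1) * wx + iwx) = x icx ihx iwx)
    (yt : ℕ → ℝ)
    (hyt : ∀ icx ∈ Icc 1 cx, ∀ ihy ∈ Icc 1 hy, ∀ iwy ∈ Icc 1 wy,
      yt ((icx - 1) * (hy * wy) + (ihy - 1) * wy + iwy) = y icx ihy iwy)
    -- the padding matrix W̃ᵖ
    (Wp : ℕ → ℕ → ℝ)
    (hWp1 : ∀ r c : ℕ, IsPadEntry cx hx wx ph pw r c → Wp r c = 1)
    (hWp0 : ∀ r c : ℕ, ¬ IsPadEntry cx hx wx ph pw r c → Wp r c = 0)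
    -- the max-pooling selection matrices W^{mp}_{i_cx,i_hy,i_wy}
    (Wmp : ℕ → ℕ → ℕ → ℕ → ℕ → ℝ)
    (hWmp1 : ∀ icx ∈ Icc 1 cx, ∀ ihy ∈ Icc 1 hy, ∀ iwy ∈ Icc 1 wy,
      ∀ ihp ∈ Icc 1 hp, ∀ iwp ∈ Icc 1 wp,
        Wmp icx ihy iwy (mpRow wp ihp iwp) (mpCol hx wx ph pw sh sw icx ihy iwy ihp iwp) = 1)
    (hWmp0 : ∀ icx ∈ Icc 1 cx, ∀ ihy ∈ Icc 1 hy, ∀ iwy ∈ Icc 1 wy, ∀ r c : ℕ,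
      (¬ ∃ ihp ∈ Icc 1 hp, ∃ iwp ∈ Icc 1 wp,
          r = mpRow wp ihp iwp ∧ c = mpCol hx wx ph pw sh sw icx ihy iwy ihp iwp) →
        Wmp icx ihy iwy r c = 0) :
    -- conclusion: entrywise, ỹ = max(W^{mp}_{i_cx,i_hy,i_wy}·W̃^{p}·x̃)
    ∀ icx ∈ Icc 1 cx, ∀ ihy ∈ Icc 1 hy, ∀ iwy ∈ Icc 1 wy,
      yt ((icx - 1) * (hy * wy) + (ihy - 1) * wy + iwy) =
        (Icc 1 (hp * wp)).sup' (Finset.nonempty_Icc.mpr (Nat.mul_pos hhp hwp))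
          (fun j => ∑ r ∈ Icc 1 (cx * ((hx + 2 * ph) * (wx + 2 * pw))),
            Wmp icx ihy iwy j r * ∑ q ∈ Icc 1 (cx * (hx * wx)), Wp r q * xt q) := by
  intro icx hicx ihy hihy iwy hiwy
  rw [hyt icx hicx ihy hihy iwy hiwy, hydef icx hicx ihy hihy iwy hiwy,
    ← sup'_congr (((nonempty_Icc.mpr hhp).product (nonempty_Icc.mpr hwp)).image _)
      (image_rowMajor_product hp wp) fun _ _ => rfl, sup'_image]
  refine sup'_congr _ rfl fun q hq => ?_
  obtain ⟨hihp, hiwp⟩ := mem_product.mp hq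
  have hjh : q.1 + (ihy - 1) * sh ∈ Icc 1 (hx + 2 * ph) :=
    Icc_subset_Icc_right (by omega) (add_sub_one_mul_mem_Icc (hhy ▸ hihy) hihp)
  have hjw : q.2 + (iwy - 1) * sw ∈ Icc 1 (wx + 2 * pw) :=
    Icc_subset_Icc_right (by omega) (add_sub_one_mul_mem_Icc (hwy ▸ hiwy) hiwp)
  rw [Function.comp_apply, ← mpRow_eq_rowMajor,
    sum_mpMatrix_row_mul hWmp1 hWmp0 _ hicx hihy hiwy hihp hiwp ?_,
    mpCol_eq_rowMajor (mem_Icc.mp hihp).1, sum_padMatrix_row_mul hxt hWp1 hWp0 hicx hjh hjw]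
  rw [mpCol_eq_rowMajor (mem_Icc.mp hihp).1]
  exact rowMajor_mem_Icc hicx (rowMajor_mem_Icc hjh hjw)

/-- Lemma 3 of the paper: a max pooling layer equals a fully-connected layer
with maxout activation on row-major flattened vectors: for every output index
`(i_cx, i_hy, i_wy)`, the corresponding entry of `ỹ` equals
`max(W^{mp}_{i_cx,i_hy,i_wy}·W̃^{p}·x̃)`.

Tensors are encoded as functions of their 1-based indices, matrices as functions of their
1-based row/column indices, and vectors as functions of their 1-based positions; all
index formulas match the statement. -/
theorem maxpool_layer_eq_maxout
    -- dimensions and hyperparameters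
    (cx hx wx : ℕ) (hp wp : ℕ) (hhp : 0 < hp) (hwp : 0 < wp) (ph pw : ℕ)
    (sh sw : ℕ) (hsh : 0 < sh) (hsw : 0 < sw)
    (hy wy : ℕ) (hhy0 : 0 < hy) (hwy0 : 0 < wy)
    (hhy : hy = (hx + ph + sh - hp) / sh) (hwy : wy = (wx + pw + sw - wp) / sw)
    -- input tensor
    (x : ℕ → ℕ → ℕ → ℝ)
    -- the max-pooling output y
    (y : ℕ → ℕ → ℕ → ℝ)
    (hydef : ∀ icx ∈ Icc 1 cx, ∀ ihy ∈ Icc 1 hy, ∀ iwy ∈ Icc 1 wy,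
      y icx ihy iwy = ((Icc 1 hp) ×ˢ (Icc 1 wp)).sup'
        (Finset.Nonempty.product (Finset.nonempty_Icc.mpr hhp) (Finset.nonempty_Icc.mpr hwp))
        (fun q =>
          if 1 ≤ q.1 + (ihy - 1) * sh - ph ∧ q.1 + (ihy - 1) * sh - ph ≤ hx ∧
              1 ≤ q.2 + (iwy - 1) * sw - pw ∧ q.2 + (iwy - 1) * sw - pw ≤ wx then
            x icx (q.1 + (ihy - 1) * sh - ph) (q.2 + (iwy - 1) * sw - pw)
          else 0))
    -- row-major flattenings x̃ and ỹ
    (xt : ℕ → ℝ)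
    (hxt : ∀ icx ∈ Icc 1 cx, ∀ ihx ∈ Icc 1 hx, ∀ iwx ∈ Icc 1 wx,
      xt ((icx - 1) * (hx * wx) + (ihx - 1) * wx + iwx) = x icx ihx iwx)
    (yt : ℕ → ℝ)
    (hyt : ∀ icx ∈ Icc 1 cx, ∀ ihy ∈ Icc 1 hy, ∀ iwy ∈ Icc 1 wy,
      yt ((icx - 1) * (hy * wy) + (ihy - 1) * wy + iwy) = y icx ihy iwy)
    -- the padding matrix W̃ᵖ
    (Wp : ℕ → ℕ → ℝ)
    (hWp1 : ∀ r c : ℕ, IsPadEntry cx hx wx ph pw r c → Wp r c = 1)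
    (hWp0 : ∀ r c : ℕ, ¬ IsPadEntry cx hx wx ph pw r c → Wp r c = 0)
    -- the max-pooling selection matrices W^{mp}_{i_cx,i_hy,i_wy}
    (Wmp : ℕ → ℕ → ℕ → ℕ → ℕ → ℝ)
    (hWmp1 : ∀ icx ∈ Icc 1 cx, ∀ ihy ∈ Icc 1 hy, ∀ iwy ∈ Icc 1 wy,
      ∀ ihp ∈ Icc 1 hp, ∀ iwp ∈ Icc 1 wp,
        Wmp icx ihy iwy (mpRow wp ihp iwp) (mpCol hx wx ph pw sh sw icx ihy iwy ihp iwp) = 1)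
    (hWmp0 : ∀ icx ∈ Icc 1 cx, ∀ ihy ∈ Icc 1 hy, ∀ iwy ∈ Icc 1 wy, ∀ r c : ℕ,
      (¬ ∃ ihp ∈ Icc 1 hp, ∃ iwp ∈ Icc 1 wp,
          r = mpRow wp ihp iwp ∧ c = mpCol hx wx ph pw sh sw icx ihy iwy ihp iwp) →
        Wmp icx ihy iwy r c = 0) :
    -- conclusion: entrywise, ỹ = max(W^{mp}_{i_cx,i_hy,i_wy}·W̃^{p}·x̃)
    ∀ icx ∈ Icc 1 cx, ∀ ihy ∈ Icc 1 hy, ∀ iwy ∈ Icc 1 wy,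
      yt ((icx - 1) * (hy * wy) + (ihy - 1) * wy + iwy) =
        (Icc 1 (hp * wp)).sup' (Finset.nonempty_Icc.mpr (Nat.mul_pos hhp hwp))
          (fun j => ∑ r ∈ Icc 1 (cx * ((hx + 2 * ph) * (wx + 2 * pw))),
            Wmp icx ihy iwy j r * ∑ q ∈ Icc 1 (cx * (hx * wx)), Wp r q * xt q) :=
  maxpool_layer_eq_maxout_general cx hx wx hp wp hhp hwp ph pw sh sw hy wy hhy hwy x y hydef xt hxt
    yt hyt Wp hWp1 hWp0 Wmp hWmp1 hWmp0
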